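/- arXiv:1903.06675 — 2 statements merged into one kernel-verified Lean document; each statement's English description precedes it below -/
import Mathlib

section
/- Let A be an n×n irreducible nonnegative matrix with Perron root λ₀. Then every eigenvalue μ of A satisfies |μ| ≤ λ₀, and if A is additionally aperiodic (primitive), then |μ| < λ₀ for all eigenvalues μ ≠ λ₀. -/
open Matrix

private lemma pf_complex_real_of_re_eq_abs (z : ℂ) (h : z.re = ‖z‖) :
    z = (z.re : ℂ) := by
  have h1 : z.im = 0 := by
    have := Complex.sq_norm z
    rw [Complex.normSq_apply, ← h] at this
    nlinarith
  simp [Complex.ext_iff, h1]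

/-- Perron–Frobenius theorem (parts 2 and 3): for an `n × n` irreducible nonnegative
matrix `A` with Perron root `λ₀`, every (complex) eigenvalue `μ` satisfies `|μ| ≤ λ₀`;
if moreover `A` is primitive (aperiodic), then `|μ| < λ₀` for every eigenvalue `μ ≠ λ₀`. -/
theorem perron_frobenius_spectral_bound
    (n : ℕ) (hn : 0 < n) (A : Matrix (Fin n) (Fin n) ℝ)
    (hnonneg : ∀ i j, 0 ≤ A i j)
    (hirred : ∀ i j, ∃ m : ℕ, 0 < (A ^ m) i j)
    (lam0 : ℝ)
    (hlam0 : lam0 = sSup {lam : ℝ | ∃ x : Fin n → ℝ,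
      (∀ i, 0 < x i) ∧ ∀ i, lam * x i ≤ A.mulVec x i})
    (μ : ℂ) (v : Fin n → ℂ) (hv : v ≠ 0)
    (heig : (A.map (fun a => (a : ℂ))).mulVec v = μ • v) :
    ‖μ‖ ≤ lam0 ∧
      ((∃ m : ℕ, ∀ i j, 0 < (A ^ m) i j) → μ ≠ (lam0 : ℂ) → ‖μ‖ < lam0) := by
  classical
  set S : Set ℝ := {lam : ℝ | ∃ x : Fin n → ℝ,
      (∀ i, 0 < x i) ∧ ∀ i, lam * x i ≤ A.mulVec x i} with hS
  -- powers of A have nonnegative entries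
  have hpow : ∀ k (i j : Fin n), 0 ≤ (A ^ k) i j := by
    intro k
    induction k with
    | zero => intro i j; simp [Matrix.one_apply]; positivity
    | succ k ih =>
      intro i j
      rw [pow_succ, Matrix.mul_apply]
      exact Finset.sum_nonneg fun l _ => mul_nonneg (ih i l) (hnonneg l j)
  -- 0 ∈ S
  have hS0 : (0 : ℝ) ∈ S := by
    refine ⟨fun _ => 1, fun i => one_pos, fun i => ?_⟩
    simp only [zero_mul, Matrix.mulVec, dotProduct]
    exact Finset.sum_nonneg fun j _ => by simpa using hnonneg i j
  -- S is bounded above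
  have hSbdd : BddAbove S := by
    refine ⟨∑ i, ∑ j, A i j, fun lam hlam => ?_⟩
    obtain ⟨x, hx, hineq⟩ := hlam
    obtain ⟨i₀, -, hi₀⟩ := Finset.exists_max_image Finset.univ x ⟨⟨0, hn⟩, Finset.mem_univ _⟩
    have h1 : lam * x i₀ ≤ (∑ i, ∑ j, A i j) * x i₀ := by
      calc lam * x i₀ ≤ A.mulVec x i₀ := hineq i₀
        _ = ∑ j, A i₀ j * x j := by simp [Matrix.mulVec, dotProduct]
        _ ≤ ∑ j, A i₀ j * x i₀ := Finset.sum_le_sum fun j _ =>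
            mul_le_mul_of_nonneg_left (hi₀ j (Finset.mem_univ j)) (hnonneg i₀ j)
        _ = (∑ j, A i₀ j) * x i₀ := by rw [Finset.sum_mul]
        _ ≤ (∑ i, ∑ j, A i j) * x i₀ := by
            refine mul_le_mul_of_nonneg_right ?_ (le_of_lt (hx i₀))
            exact Finset.single_le_sum (f := fun i => ∑ j, A i j)
              (fun i _ => Finset.sum_nonneg fun j _ => hnonneg i j) (Finset.mem_univ i₀)
    exact le_of_mul_le_mul_right h1 (hx i₀)
  have hlam0_nonneg : 0 ≤ lam0 := hlam0 ▸ le_csSup hSbdd hS0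
  -- the positive matrix B = ∑_{k ≤ N} A^k
  choose m hm using hirred
  set N : ℕ := Finset.univ.sup (fun p : Fin n × Fin n => m p.1 p.2) with hN
  set B : Matrix (Fin n) (Fin n) ℝ := ∑ k ∈ Finset.range (N + 1), A ^ k with hB
  have hBpos : ∀ i j, 0 < B i j := by
    intro i j
    have hmem : m i j ∈ Finset.range (N + 1) := by
      refine Finset.mem_range.2 (Nat.lt_succ_of_le ?_)
      exact Finset.le_sup (f := fun p : Fin n × Fin n => m p.1 p.2) (Finset.mem_univ (i, j))
    have : (A ^ m i j) i j ≤ B i j := by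
      rw [hB, Matrix.sum_apply]
      exact Finset.single_le_sum (fun k _ => hpow k i j) hmem
    exact lt_of_lt_of_le (hm i j) this
  have hBnonneg : ∀ i j, 0 ≤ B i j := fun i j => (hBpos i j).le
  have hBA : B * A = A * B := by
    have : Commute A B := Commute.sum_right _ _ _ fun k _ => (Commute.refl A).pow_right k
    exact this.symm
  -- B is monotone on vectors
  have hBmono : ∀ x y : Fin n → ℝ, (∀ j, x j ≤ y j) → ∀ i, B.mulVec x i ≤ B.mulVec y i := by
    intro x y hxy i
    simp only [Matrix.mulVec, dotProduct]
    exact Finset.sum_le_sum fun j _ => mul_le_mul_of_nonneg_left (hxy j) (hBnonneg i j)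
  -- B maps nonneg nonzero vectors to positive vectors
  have hBposvec : ∀ w : Fin n → ℝ, (∀ i, 0 ≤ w i) → w ≠ 0 → ∀ i, 0 < B.mulVec w i := by
    intro w hw0 hwne i
    obtain ⟨j₀, hj₀⟩ := Function.ne_iff.1 hwne
    have hj₀' : 0 < w j₀ := lt_of_le_of_ne (hw0 j₀) (Ne.symm hj₀)
    have : B i j₀ * w j₀ ≤ B.mulVec w i := by
      simp only [Matrix.mulVec, dotProduct]
      exact Finset.single_le_sum (fun j _ => mul_nonneg (hBnonneg i j) (hw0 j))
        (Finset.mem_univ j₀)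
    exact lt_of_lt_of_le (mul_pos (hBpos i j₀) hj₀') this
  -- key: subinvariant nonneg nonzero vector certifies membership in S
  have hmemS : ∀ (c : ℝ) (w : Fin n → ℝ), (∀ i, 0 ≤ w i) → w ≠ 0 →
      (∀ i, c * w i ≤ A.mulVec w i) → c ∈ S := by
    intro c w hw0 hwne hcw
    refine ⟨B.mulVec w, hBposvec w hw0 hwne, fun i => ?_⟩
    have h0 : c * B.mulVec w i = B.mulVec (fun j => c * w j) i := by
      simp only [Matrix.mulVec, dotProduct, Finset.mul_sum]
      exact Finset.sum_congr rfl fun j _ => by ring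
    calc c * B.mulVec w i = B.mulVec (fun j => c * w j) i := h0
      _ ≤ B.mulVec (A.mulVec w) i := hBmono _ _ hcw i
      _ = (B * A).mulVec w i := by rw [Matrix.mulVec_mulVec]
      _ = (A * B).mulVec w i := by rw [hBA]
      _ = A.mulVec (B.mulVec w) i := by rw [Matrix.mulVec_mulVec]
  -- the absolute-value vector
  set z : Fin n → ℝ := fun i => ‖v i‖ with hz
  have hz0 : ∀ i, 0 ≤ z i := fun i => norm_nonneg _
  have hzne : z ≠ 0 := by
    obtain ⟨j₀, hj₀⟩ := Function.ne_iff.1 hv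
    exact Function.ne_iff.2 ⟨j₀, by simpa [hz] using hj₀⟩
  have heig' : ∀ i, ∑ j, (A i j : ℂ) * v j = μ * v i := by
    intro i
    have := congrFun heig i
    simpa [Matrix.mulVec, dotProduct, Matrix.map_apply] using this
  have habs : ∀ i, ‖μ‖ * z i ≤ A.mulVec z i := by
    intro i
    have h0 : ‖μ‖ * z i = ‖∑ j, (A i j : ℂ) * v j‖ := by
      rw [heig' i, norm_mul]
    rw [h0]
    calc ‖∑ j, (A i j : ℂ) * v j‖
        ≤ ∑ j, ‖(A i j : ℂ) * v j‖ := norm_sum_le _ _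
      _ = ∑ j, A i j * z j := by
          refine Finset.sum_congr rfl fun j _ => ?_
          rw [norm_mul, Complex.norm_real, Real.norm_eq_abs, abs_of_nonneg (hnonneg i j)]
      _ = A.mulVec z i := by simp [Matrix.mulVec, dotProduct]
  have habs_mem : ‖μ‖ ∈ S := hmemS _ z hz0 hzne habs
  have part1 : ‖μ‖ ≤ lam0 := hlam0 ▸ le_csSup hSbdd habs_mem
  refine ⟨part1, fun hprim hμne => ?_⟩
  by_contra hcon
  have habs_eq : ‖μ‖ = lam0 := le_antisymm part1 (not_lt.1 hcon)
  -- Step A : A z = lam0 z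
  have hAz : A.mulVec z = lam0 • z := by
    by_contra hne
    set w : Fin n → ℝ := fun i => A.mulVec z i - lam0 * z i with hw
    have hw0 : ∀ i, 0 ≤ w i := fun i => sub_nonneg.2 (habs_eq ▸ habs i)
    have hwne : w ≠ 0 := by
      intro h0
      apply hne
      funext i
      have := congrFun h0 i
      simp only [hw, Pi.zero_apply] at this
      simp only [Pi.smul_apply, smul_eq_mul]
      linarith
    set y : Fin n → ℝ := B.mulVec z with hy
    have hy0 : ∀ i, 0 < y i := hBposvec z hz0 hzne
    have hstrict : ∀ i, lam0 * y i < A.mulVec y i := by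
      intro i
      have hBw : 0 < B.mulVec w i := hBposvec w hw0 hwne i
      have hkey : A.mulVec y i - lam0 * y i = B.mulVec w i := by
        have h1 : A.mulVec y i = B.mulVec (A.mulVec z) i := by
          rw [hy, Matrix.mulVec_mulVec, ← hBA, ← Matrix.mulVec_mulVec]
        have h2 : lam0 * y i = B.mulVec (fun j => lam0 * z j) i := by
          simp only [hy, Matrix.mulVec, dotProduct, Finset.mul_sum]
          exact Finset.sum_congr rfl fun j _ => by ring
        rw [h1, h2]
        simp only [Matrix.mulVec, dotProduct, hw, ← Finset.sum_sub_distrib]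
        exact Finset.sum_congr rfl fun j _ => by ring
      linarith
    obtain ⟨i₁, -, hi₁⟩ := Finset.exists_min_image Finset.univ
      (fun i => (A.mulVec y i - lam0 * y i) / y i) ⟨⟨0, hn⟩, Finset.mem_univ _⟩
    set ε : ℝ := (A.mulVec y i₁ - lam0 * y i₁) / y i₁ with hε
    have hεpos : 0 < ε := div_pos (by linarith [hstrict i₁]) (hy0 i₁)
    have hmem2 : lam0 + ε ∈ S := by
      refine ⟨y, hy0, fun i => ?_⟩
      have h2 : ε ≤ (A.mulVec y i - lam0 * y i) / y i := hi₁ i (Finset.mem_univ i)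
      have h3 : ε * y i ≤ A.mulVec y i - lam0 * y i := by
        calc ε * y i ≤ (A.mulVec y i - lam0 * y i) / y i * y i :=
            mul_le_mul_of_nonneg_right h2 (hy0 i).le
          _ = A.mulVec y i - lam0 * y i := div_mul_cancel₀ _ (hy0 i).ne'
      linarith
    have := le_csSup hSbdd hmem2
    rw [← hlam0] at this
    linarith
  -- z is strictly positive
  obtain ⟨p, hp⟩ := hprim
  have hApowz : ∀ k, (A ^ k).mulVec z = lam0 ^ k • z := by
    intro k
    induction k with
    | zero => simp
    | succ k ih =>
      rw [pow_succ', pow_succ, ← Matrix.mulVec_mulVec, ih, Matrix.mulVec_smul, hAz,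
        smul_smul, mul_comm]
  have hzpos : ∀ i, 0 < z i := by
    intro i
    rcases lt_or_eq_of_le (hz0 i) with h | h
    · exact h
    obtain ⟨j₀, hj₀⟩ := Function.ne_iff.1 hzne
    have hj₀' : 0 < z j₀ := lt_of_le_of_ne (hz0 j₀) (Ne.symm hj₀)
    exfalso
    have h1 : (A ^ p).mulVec z i = 0 := by
      rw [hApowz]
      simp only [Pi.smul_apply, smul_eq_mul, ← h, mul_zero]
    have h2 : (A ^ p) i j₀ * z j₀ ≤ (A ^ p).mulVec z i := by
      simp only [Matrix.mulVec, dotProduct]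
      exact Finset.single_le_sum (fun j _ => mul_nonneg (hpow p i j) (hz0 j))
        (Finset.mem_univ j₀)
    have := mul_pos (hp i j₀) hj₀'
    linarith
  -- lam0 > 0 (else A = 0 and μ = 0 = lam0)
  have hlam0_pos : 0 < lam0 := by
    rcases lt_or_eq_of_le hlam0_nonneg with h | h
    · exact h
    exfalso
    have hA0 : A = 0 := by
      funext i j
      have h1 : A.mulVec z i = 0 := by rw [hAz, ← h]; simp
      have h2 : A i j * z j ≤ A.mulVec z i := by
        simp only [Matrix.mulVec, dotProduct]
        exact Finset.single_le_sum (fun l _ => mul_nonneg (hnonneg i l) (hz0 l))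
          (Finset.mem_univ j)
      have h3 : 0 ≤ A i j * z j := mul_nonneg (hnonneg i j) (hz0 j)
      have h4 : A i j * z j = 0 := le_antisymm (h1 ▸ h2) h3
      simp only [Matrix.zero_apply]
      rcases mul_eq_zero.1 h4 with h5 | h5
      · exact h5
      · exact absurd h5 (hzpos j).ne'
    apply hμne
    obtain ⟨j₀, hj₀⟩ := Function.ne_iff.1 hv
    have hall := heig' j₀
    simp only [hA0, Matrix.zero_apply, Complex.ofReal_zero, zero_mul,
      Finset.sum_const_zero] at hall
    have hμ0 : μ = 0 := by
      rcases mul_eq_zero.1 hall.symm with h5 | h5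
      · exact h5
      · exact absurd h5 hj₀
    rw [hμ0, ← h]
    simp
  -- eigen equation for powers over ℂ
  have hpoweig : ∀ k, ((A.map (fun a => (a : ℂ))) ^ k).mulVec v = μ ^ k • v := by
    intro k
    induction k with
    | zero => simp
    | succ k ih =>
      rw [pow_succ', pow_succ, ← Matrix.mulVec_mulVec, ih, Matrix.mulVec_smul, heig,
        smul_smul, mul_comm]
  -- the positive power C = A ^ p and equality in the triangle inequality
  set C : Matrix (Fin n) (Fin n) ℝ := A ^ p with hC
  have hCz : ∀ i, ∑ j, C i j * z j = lam0 ^ p * z i := by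
    intro i
    have := congrFun (hApowz p) i
    simp only [Matrix.mulVec, dotProduct, Pi.smul_apply, smul_eq_mul] at this
    exact this
  have hCeig : ∀ i, ∑ j, (C i j : ℂ) * v j = μ ^ p * v i := by
    have hmap : (A.map (fun a => (a : ℂ))) ^ p = C.map (fun a => (a : ℂ)) := by
      have h0 : (A.map (fun a => (a : ℂ)))
          = (Complex.ofRealHom.mapMatrix : Matrix (Fin n) (Fin n) ℝ →+* _) A := rfl
      rw [hC, h0, ← map_pow]; rfl
    intro i
    have := congrFun (hmap ▸ hpoweig p) i
    simpa [Matrix.mulVec, dotProduct, Matrix.map_apply] using this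
  set i₀ : Fin n := ⟨0, hn⟩ with hi₀def
  set s : ℂ := μ ^ p * v i₀ with hs
  have habs_s : ‖s‖ = ∑ j, C i₀ j * z j := by
    rw [hs, norm_mul, norm_pow, habs_eq, hCz i₀]
  have hs_pos : 0 < ‖s‖ := by
    rw [habs_s, hCz i₀]
    exact mul_pos (pow_pos hlam0_pos p) (hzpos i₀)
  have hs_ne : s ≠ 0 := by
    intro h0
    rw [h0, norm_zero] at hs_pos
    exact lt_irrefl _ hs_pos
  set c : ℂ := s / (‖s‖ : ℂ) with hc
  have habs_c : ‖c‖ = 1 := by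
    rw [hc, norm_div, Complex.norm_real, Real.norm_eq_abs, abs_of_nonneg (norm_nonneg s)]
    exact div_self hs_pos.ne'
  have hc_ne : c ≠ 0 := by
    intro h0
    rw [h0] at habs_c
    simp at habs_c
  -- termwise equality in the triangle inequality
  have hterm_re : ∀ j, ((starRingEnd ℂ) s * ((C i₀ j : ℂ) * v j)).re
      = ‖s‖ * (C i₀ j * z j) := by
    have hsum0 : ∑ j, (‖s‖ * (C i₀ j * z j)
        - ((starRingEnd ℂ) s * ((C i₀ j : ℂ) * v j)).re) = 0 := by
      rw [Finset.sum_sub_distrib, ← Finset.mul_sum, ← habs_s]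
      have h1 : ∑ j, ((starRingEnd ℂ) s * ((C i₀ j : ℂ) * v j)).re
          = ((starRingEnd ℂ) s * ∑ j, (C i₀ j : ℂ) * v j).re := by
        rw [Finset.mul_sum, Complex.re_sum]
      rw [h1, hCeig i₀, ← hs]
      have h2 : (starRingEnd ℂ) s * s = ((‖s‖ ^ 2 : ℝ) : ℂ) := by
        rw [mul_comm, Complex.mul_conj, Complex.normSq_eq_norm_sq]
      rw [h2]
      simp [sq]
    have hnn : ∀ j ∈ Finset.univ, 0 ≤ ‖s‖ * (C i₀ j * z j)
        - ((starRingEnd ℂ) s * ((C i₀ j : ℂ) * v j)).re := by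
      intro j _
      have h1 : ((starRingEnd ℂ) s * ((C i₀ j : ℂ) * v j)).re
          ≤ ‖(starRingEnd ℂ) s * ((C i₀ j : ℂ) * v j)‖ := Complex.re_le_norm _
      have h2 : ‖(starRingEnd ℂ) s * ((C i₀ j : ℂ) * v j)‖
          = ‖s‖ * (C i₀ j * z j) := by
        rw [norm_mul, norm_mul, Complex.norm_conj,
          Complex.norm_real, Real.norm_eq_abs, abs_of_nonneg (hpow p i₀ j)]
      linarith [h2 ▸ h1]
    have := (Finset.sum_eq_zero_iff_of_nonneg hnn).1 hsum0
    intro j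
    have hj := this j (Finset.mem_univ j)
    linarith
  -- hence v j = z j • c for every j
  have hterm : ∀ j, v j = (z j : ℝ) * c := by
    intro j
    have key := hterm_re j
    -- u := conj c * v j has re = |u| = z j
    set u : ℂ := (starRingEnd ℂ) c * v j with hu
    have habs_u : ‖u‖ = z j := by
      rw [hu, norm_mul, Complex.norm_conj, habs_c, one_mul]
    have hconj_s : (starRingEnd ℂ) s = (‖s‖ : ℂ) * (starRingEnd ℂ) c := by
      have hne : (‖s‖ : ℂ) ≠ 0 := by exact_mod_cast hs_pos.ne'
      rw [hc, map_div₀, Complex.conj_ofReal]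
      field_simp
    have hre_u : u.re = z j := by
      have h1 : ((starRingEnd ℂ) s * ((C i₀ j : ℂ) * v j)).re
          = ‖s‖ * C i₀ j * u.re := by
        rw [hconj_s, hu]
        have : (‖s‖ : ℂ) * (starRingEnd ℂ) c * ((C i₀ j : ℂ) * v j)
            = ((‖s‖ * C i₀ j : ℝ) : ℂ) * ((starRingEnd ℂ) c * v j) := by
          push_cast
          ring
        rw [this]
        simp [Complex.mul_re]
      rw [h1] at key
      have hpos : 0 < ‖s‖ * C i₀ j := mul_pos hs_pos (hp i₀ j)
      have : ‖s‖ * C i₀ j * u.re = ‖s‖ * C i₀ j * z j := by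
        rw [key]; ring
      exact mul_left_cancel₀ hpos.ne' this
    have hu_real : u = ((z j : ℝ) : ℂ) := by
      have := pf_complex_real_of_re_eq_abs u (by rw [hre_u, habs_u])
      rw [this, hre_u]
    -- multiply by c : c * u = c * conj c * v j = v j
    have hcc : c * (starRingEnd ℂ) c = 1 := by
      rw [Complex.mul_conj, Complex.normSq_eq_norm_sq, habs_c]
      simp
    calc v j = c * (starRingEnd ℂ) c * v j := by rw [hcc, one_mul]
      _ = c * u := by rw [hu]; ring
      _ = (z j : ℝ) * c := by rw [hu_real]; ring
  -- conclude μ = lam0, contradiction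
  apply hμne
  have hi := heig' i₀
  have hlhs : ∑ j, (A i₀ j : ℂ) * v j = ((lam0 * z i₀ : ℝ) : ℂ) * c := by
    calc ∑ j, (A i₀ j : ℂ) * v j = ∑ j, ((A i₀ j * z j : ℝ) : ℂ) * c := by
          refine Finset.sum_congr rfl fun j _ => ?_
          rw [hterm j]
          push_cast
          ring
      _ = ((∑ j, A i₀ j * z j : ℝ) : ℂ) * c := by
          rw [← Finset.sum_mul]
          push_cast
          ring
      _ = ((lam0 * z i₀ : ℝ) : ℂ) * c := by
          have := congrFun hAz i₀
          simp only [Matrix.mulVec, dotProduct, Pi.smul_apply, smul_eq_mul] at this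
          rw [this]
  rw [hlhs, hterm i₀] at hi
  have hzc_ne : ((z i₀ : ℝ) : ℂ) * c ≠ 0 :=
    mul_ne_zero (by exact_mod_cast (hzpos i₀).ne') hc_ne
  have : ((lam0 : ℝ) : ℂ) * (((z i₀ : ℝ) : ℂ) * c) = μ * (((z i₀ : ℝ) : ℂ) * c) := by
    rw [← hi]
    push_cast
    ring
  exact (mul_right_cancel₀ hzc_ne this).symm
end

section
/- For h, s > 0, the expected fraction of a sampling interval of length h during which a shift (occurring at an exponential(s) time T, conditioned on T ≤ h) remains undetected satisfies E((h−T)/h | T ≤ h) = (h s e^{hs} − e^{hs} + 1)/(h s (e^{hs} − 1)). -/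
open MeasureTheory ProbabilityTheory

/-- For an exponential(`s`) shift time `T`, the expected fraction of a sampling interval
of length `h` during which the shift remains undetected is
`E((h − T)/h | T ≤ h) = (h s e^{hs} − e^{hs} + 1)/(h s (e^{hs} − 1))`. -/
theorem duncan_B_formula
    {Ω : Type*} [MeasurableSpace Ω] (μ : Measure Ω) [IsProbabilityMeasure μ]
    (s h : ℝ) (hs : 0 < s) (hh : 0 < h)
    (T : Ω → ℝ) (hTm : Measurable T)
    (hT : Measure.map T μ = expMeasure s) :
    (∫ ω in {ω | T ω ≤ h}, (h - T ω) / h ∂μ) / (μ {ω | T ω ≤ h}).toReal =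
      (h * s * Real.exp (h * s) - Real.exp (h * s) + 1) /
        (h * s * (Real.exp (h * s) - 1)) := by
  haveI := isProbabilityMeasure_expMeasure hs
  have hset : {ω | T ω ≤ h} = T ⁻¹' Set.Iic h := rfl
  -- denominator
  have hden : (μ {ω | T ω ≤ h}).toReal = 1 - Real.exp (-(s * h)) := by
    rw [hset, ← Measure.map_apply hTm measurableSet_Iic, hT]
    have := cdf_expMeasure_eq hs h
    rw [cdf_eq_real, measureReal_def] at this
    rw [this, if_pos hh.le]
  -- numerator
  have hnum : (∫ ω in {ω | T ω ≤ h}, (h - T ω) / h ∂μ)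
      = Real.exp (-(s * h)) / (h * s) + 1 - 1 / (h * s) := by
    have h1 : (∫ ω in {ω | T ω ≤ h}, (h - T ω) / h ∂μ)
        = ∫ x in Set.Iic h, (h - x) / h ∂(expMeasure s) := by
      rw [hset, ← hT,
        setIntegral_map measurableSet_Iic
          (Continuous.aestronglyMeasurable (by continuity)) hTm.aemeasurable]
    rw [h1]
    have hd : expMeasure s
        = volume.withDensity (fun x => ((exponentialPDFReal s x).toNNReal : ENNReal)) := rfl
    rw [hd, setIntegral_withDensity_eq_setIntegral_smul
      ((measurable_exponentialPDFReal s).real_toNNReal) _ measurableSet_Iic]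
    have h2 : ∀ x : ℝ, (exponentialPDFReal s x).toNNReal • ((h - x) / h)
        = Set.indicator (Set.Ici 0) (fun x => s * Real.exp (-(s * x)) * ((h - x) / h)) x := by
      intro x
      rw [NNReal.smul_def, Real.coe_toNNReal', exponentialPDFReal, gammaPDFReal]
      by_cases hx : 0 ≤ x
      · simp only [Set.indicator, Set.mem_Ici, hx, if_true, Real.Gamma_one, pow_one, sub_self,
          Real.rpow_zero, mul_one, div_one]
        rw [sup_eq_left.mpr (by positivity)]
        simp [Real.rpow_one, smul_eq_mul]
      · simp [Set.indicator, hx]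
    simp_rw [h2]
    rw [setIntegral_indicator measurableSet_Ici]
    have h3 : Set.Iic h ∩ Set.Ici 0 = Set.Icc 0 h := by
      ext x; simp [Set.mem_Icc, and_comm]
    rw [h3, MeasureTheory.integral_Icc_eq_integral_Ioc, ← intervalIntegral.integral_of_le hh.le]
    have hA : ∀ x : ℝ, HasDerivAt (fun x => Real.exp (-(s * x)) * ((x - h) / h + 1 / (h * s)))
        (s * Real.exp (-(s * x)) * ((h - x) / h)) x := by
      intro x
      have hf : HasDerivAt (fun x : ℝ => Real.exp (-(s * x))) (Real.exp (-(s * x)) * (-s)) x := by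
        simpa using (((hasDerivAt_id x).const_mul s).neg).exp
      have hg : HasDerivAt (fun x : ℝ => (x - h) / h + 1 / (h * s)) (1 / h) x := by
        simpa using (((hasDerivAt_id x).sub_const h).div_const h).add_const (1 / (h * s))
      refine (hf.fun_mul hg).congr_deriv ?_
      field_simp
      ring
    rw [intervalIntegral.integral_eq_sub_of_hasDerivAt (fun x _ => hA x)
      (Continuous.intervalIntegrable (by continuity) 0 h)]
    simp only [mul_zero, neg_zero, Real.exp_zero, one_mul, zero_sub, sub_zero]
    field_simp
    ring
  rw [hnum, hden]
  have hE : Real.exp (-(s * h)) = (Real.exp (h * s))⁻¹ := by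
    rw [Real.exp_neg, mul_comm]
  have hEpos : (0:ℝ) < Real.exp (h * s) := Real.exp_pos _
  have hE1 : 1 < Real.exp (h * s) := by
    have h2 := Real.add_one_le_exp (h * s)
    nlinarith [mul_pos hh hs]
  rw [hE]
  rw [div_eq_div_iff, ]
  · field_simp
    ring
  · have : (Real.exp (h * s))⁻¹ < 1 := by
      rw [inv_lt_one_iff₀]; right; exact hE1
    linarith
  · have : (0:ℝ) < Real.exp (h * s) - 1 := by linarith
    positivity
end
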